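/- For every z ∈ ℝ³, the iterated Lie bracket of g_V with [g_P, g_V] satisfies [g_V, [g_P, g_V]](z) = −[g_P, g_V](z). -/

import Mathlib

noncomputable section

/-- Drift vector field of the Mayer-form SIRI dynamics, `z = (x_C, x_S, x_R)`. -/
def fVec (cP cI γ : ℝ) (z : ℝ × ℝ × ℝ) : ℝ × ℝ × ℝ :=
  (cP * (z.2.1 + z.2.2) + cI * (1 - z.2.1 - z.2.2), 0, γ * (1 - z.2.1 - z.2.2))

/-- Control vector field for the protection input. -/
def gPVec (β βh cP : ℝ) (z : ℝ × ℝ × ℝ) : ℝ × ℝ × ℝ :=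
  (-(cP * (z.2.1 + z.2.2)), -(β * z.2.1 * (1 - z.2.1 - z.2.2)),
    -(βh * z.2.2 * (1 - z.2.1 - z.2.2)))

/-- Control vector field for the vaccination input. -/
def gVVec (cV : ℝ) (z : ℝ × ℝ × ℝ) : ℝ × ℝ × ℝ := (cV * z.2.1, -z.2.1, z.2.1)

/-- Lie bracket of two vector fields on `ℝ³`:
`[X, Y](z) = DY(z) X(z) − DX(z) Y(z)`, where `D` is the Fréchet derivative. -/
def lieBr (X Y : ℝ × ℝ × ℝ → ℝ × ℝ × ℝ) (z : ℝ × ℝ × ℝ) : ℝ × ℝ × ℝ :=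
  fderiv ℝ Y z (X z) - fderiv ℝ X z (Y z)

/-!
`g_V(z) = x_S • v` with `v = (c_V, -1, 1)` is linear, so `[g_V, Y](z) = x_S • DY(z) v - Y_S(z) • v`.
Along `v` the sum `x_S + x_R` is constant, so `g_P` and `[g_P, g_V]` are affine on every line
`t ↦ z + t • v`, and `DY(z) v` is just the slope of `Y` on that line.
With `q = 1 - x_S - x_R` this gives `[g_P, g_V] = (x_S q) • w` with `w = (-β c_V, 0, β̂ - β)`,
and then `[g_V, [g_P, g_V]] = x_S • (-q • w) - 0 • v = -[g_P, g_V]`, since `w_S = 0`.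
-/

theorem lieBr_skew (X Y : ℝ × ℝ × ℝ → ℝ × ℝ × ℝ) (z : ℝ × ℝ × ℝ) :
    -lieBr Y X z = lieBr X Y z :=
  neg_sub _ _

theorem lieBr_clm_left (L : ℝ × ℝ × ℝ →L[ℝ] ℝ × ℝ × ℝ) (Y : ℝ × ℝ × ℝ → ℝ × ℝ × ℝ)
    (z : ℝ × ℝ × ℝ) : lieBr L Y z = fderiv ℝ Y z (L z) - L (Y z) := by
  rw [lieBr, L.fderiv]

theorem fderiv_apply_of_affine_on_line {𝕜 E F : Type*} [NontriviallyNormedField 𝕜]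
    [NormedAddCommGroup E] [NormedSpace 𝕜 E] [NormedAddCommGroup F] [NormedSpace 𝕜 F]
    {f : E → F} {z v : E} (b : F) (hf : DifferentiableAt 𝕜 f z)
    (hline : ∀ t : 𝕜, f (z + t • v) = f z + t • b) :
    fderiv 𝕜 f z v = b := by
  have hderiv : HasLineDerivAt 𝕜 f b z v := by
    unfold HasLineDerivAt
    simpa [hline] using ((hasDerivAt_id (0 : 𝕜)).smul_const b).const_add (f z)
  rw [← hf.lineDeriv_eq_fderiv, hderiv.lineDeriv]

theorem gVVec_eq_smulRight (cV : ℝ) :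
    gVVec cV = ((ContinuousLinearMap.fst ℝ ℝ ℝ).comp
      (ContinuousLinearMap.snd ℝ ℝ (ℝ × ℝ))).smulRight ((cV, -1, 1) : ℝ × ℝ × ℝ) := by
  ext z <;> simp [gVVec, mul_comm]

theorem lieBr_gVVec_left_of_affine (cV : ℝ) {Y : ℝ × ℝ × ℝ → ℝ × ℝ × ℝ} {z : ℝ × ℝ × ℝ}
    (b : ℝ × ℝ × ℝ) (hY : DifferentiableAt ℝ Y z)
    (hline : ∀ t : ℝ, Y (z + t • (cV, -1, 1)) = Y z + t • b) :
    lieBr (gVVec cV) Y z = z.2.1 • b - (Y z).2.1 • (cV, -1, 1) := by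
  rw [gVVec_eq_smulRight, lieBr_clm_left]
  simp only [ContinuousLinearMap.smulRight_apply, ContinuousLinearMap.comp_apply,
    ContinuousLinearMap.coe_fst', ContinuousLinearMap.coe_snd', map_smul,
    fderiv_apply_of_affine_on_line b hY hline]

theorem lieBr_gPVec_gVVec (β βh cP cV : ℝ) :
    lieBr (gPVec β βh cP) (gVVec cV) = fun z : ℝ × ℝ × ℝ =>
      (z.2.1 * (1 - z.2.1 - z.2.2)) • ((-(β * cV), 0, βh - β) : ℝ × ℝ × ℝ) := by
  funext z
  have hline : ∀ t : ℝ, gPVec β βh cP (z + t • (cV, -1, 1)) =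
      gPVec β βh cP z + t • ((0, β * (1 - z.2.1 - z.2.2), -(βh * (1 - z.2.1 - z.2.2))) :
        ℝ × ℝ × ℝ) := by
    intro t
    simp only [gPVec, Prod.fst_add, Prod.snd_add, Prod.smul_mk, Prod.mk_add_mk, smul_eq_mul,
      Prod.mk.injEq]
    refine ⟨by ring, by ring, by ring⟩
  rw [← lieBr_skew, lieBr_gVVec_left_of_affine cV _ (by unfold gPVec; fun_prop) hline]
  simp only [gPVec, Prod.smul_mk, Prod.mk_sub_mk, Prod.neg_mk, smul_eq_mul, Prod.mk.injEq]
  refine ⟨by ring, by ring, by ring⟩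

theorem siri_lie_gV_gPgV_general
    (β βh cP cV : ℝ) :
    ∀ z : ℝ × ℝ × ℝ,
      lieBr (gVVec cV) (lieBr (gPVec β βh cP) (gVVec cV)) z =
        -(lieBr (gPVec β βh cP) (gVVec cV) z) := by
  intro z
  set q := 1 - z.2.1 - z.2.2
  have hline : ∀ t : ℝ, lieBr (gPVec β βh cP) (gVVec cV) (z + t • (cV, -1, 1)) =
      lieBr (gPVec β βh cP) (gVVec cV) z + t • (-q • ((-(β * cV), 0, βh - β) : ℝ × ℝ × ℝ)) := by
    intro t
    simp only [lieBr_gPVec_gVVec, Prod.fst_add, Prod.snd_add, Prod.smul_mk, Prod.mk_add_mk,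
      smul_eq_mul, Prod.mk.injEq, q]
    refine ⟨by ring, by ring, by ring⟩
  rw [lieBr_gVVec_left_of_affine cV _ (by rw [lieBr_gPVec_gVVec]; fun_prop) hline,
    lieBr_gPVec_gVVec]
  simp only [Prod.smul_mk, Prod.mk_sub_mk, Prod.neg_mk, smul_eq_mul, Prod.mk.injEq, q]
  refine ⟨by ring, by ring, by ring⟩

/-- `[g_V, [g_P, g_V]](z) = −[g_P, g_V](z)`. -/
theorem siri_lie_gV_gPgV
    (β βh γ cP cV cI : ℝ)
    (hβ : 0 < β) (hβh : 0 < βh) (hγ : 0 < γ)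
    (hcP : 0 < cP) (hcV : 0 < cV) (hcI : 0 < cI) :
    ∀ z : ℝ × ℝ × ℝ,
      lieBr (gVVec cV) (lieBr (gPVec β βh cP) (gVVec cV)) z =
        -(lieBr (gPVec β βh cP) (gVVec cV) z) :=
  siri_lie_gV_gPgV_general β βh cP cV
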